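/- arXiv:1807.07053 — 3 statements merged into one kernel-verified Lean document; each statement's English description precedes it below -/
import Mathlib

section
/- (Proposition 1, prediction part) Let γ > 1 and let 𝔾 = {U ∈ ℝ³ : ρ(U) > 0, p(U) > 0} be the set of admissible states. For every r ≥ 1 and every choice of interpolation coefficients β₁, …, β_r ∈ ℝ not all zero, there exist admissible states U_{i−r}, …, U_{i+r} ∈ 𝔾 such that at least one of the predicted values Û_{2i} = U_i + Σ_{m=1}^{r} β_m (U_{i+m} + U_{i−m}) and Û_{2i+1} = U_i − Σ_{m=1}^{r} β_m (U_{i+m} + U_{i−m}) has negative density, i.e., ρ(Û_{2i}) < 0 or ρ(Û_{2i+1}) < 0; in particular the prediction operator is not positivity preserving. -/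
/-- Conservative state `U = (ρ, m, E)` of the 1D Euler equations: density is `U.1`. -/
noncomputable def pres (γ : ℝ) (U : ℝ × ℝ × ℝ) : ℝ :=
  (γ - 1) * (U.2.2 - U.2.1 ^ 2 / (2 * U.1))

/-- The set of admissible states `𝔾 = {U : ρ(U) > 0, p(U) > 0}`. -/
noncomputable def admissible (γ : ℝ) : Set (ℝ × ℝ × ℝ) :=
  {U | 0 < U.1 ∧ 0 < pres γ U}

/-- Proposition 1, prediction part: for every `r ≥ 1` and interpolation coefficients
`β₁, …, β_r` not all zero, there exist admissible states `U_{-r}, …, U_{r}` such that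
one of the predicted values `Û_{2i} = U_0 + Σ β_m (U_m + U_{-m})` and
`Û_{2i+1} = U_0 − Σ β_m (U_m + U_{-m})` has negative density; hence the
prediction operator is not positivity preserving. -/
theorem prediction_not_positivity_preserving (γ : ℝ) (hγ : 1 < γ)
    (r : ℕ) (hr : 1 ≤ r) (β : ℕ → ℝ) (hβ : ∃ m ∈ Finset.Icc 1 r, β m ≠ 0) :
    ∃ U : ℤ → ℝ × ℝ × ℝ,
      (∀ j : ℤ, -(r : ℤ) ≤ j → j ≤ (r : ℤ) → U j ∈ admissible γ) ∧
      ((U 0 + ∑ m ∈ Finset.Icc 1 r, β m • (U (m : ℤ) + U (-(m : ℤ)))).1 < 0 ∨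
       (U 0 - ∑ m ∈ Finset.Icc 1 r, β m • (U (m : ℤ) + U (-(m : ℤ)))).1 < 0) := by
  obtain ⟨m₀, hm₀, hb⟩ := hβ
  have hm₀1 : 1 ≤ m₀ := (Finset.mem_Icc.mp hm₀).1
  set B : ℝ := ∑ m ∈ (Finset.Icc 1 r).erase m₀, 2 * β m with hBdef
  have hbpos : 0 < |β m₀| := abs_pos.mpr hb
  set T : ℝ := (2 + |B|) / (2 * |β m₀|) with hTdef
  have hTpos : 0 < T := by
    apply div_pos
    · have := abs_nonneg B; linarith
    · linarith
  set U : ℤ → ℝ × ℝ × ℝ :=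
    fun j => if j = (m₀ : ℤ) ∨ j = -(m₀ : ℤ) then (T, 0, 1) else (1, 0, 1) with hUdef
  have hU1 : ∀ j, (U j).1 = T ∨ (U j).1 = 1 := by
    intro j
    by_cases h : j = (m₀ : ℤ) ∨ j = -(m₀ : ℤ) <;> simp [hUdef, h]
  refine ⟨U, ?_, ?_⟩
  · intro j _ _
    constructor
    · rcases hU1 j with h | h <;> rw [h] <;> [exact hTpos; norm_num]
    · have h2 : (U j).2 = ((0 : ℝ), (1 : ℝ)) := by
        by_cases h : j = (m₀ : ℤ) ∨ j = -(m₀ : ℤ) <;> simp [hUdef, h]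
      simp [pres, h2]
      linarith
  · -- compute the sum's first component
    have hsum : (∑ m ∈ Finset.Icc 1 r, β m • (U (m : ℤ) + U (-(m : ℤ)))).1
        = B + β m₀ * (2 * T) := by
      rw [Prod.fst_sum, ← Finset.sum_erase_add _ _ hm₀]
      congr 1
      · apply Finset.sum_congr rfl
        intro m hm
        have hmIcc := Finset.mem_of_mem_erase hm
        have hm1 : 1 ≤ m := (Finset.mem_Icc.mp hmIcc).1
        have hne : m ≠ m₀ := Finset.ne_of_mem_erase hm
        have h1 : ¬((m : ℤ) = (m₀ : ℤ) ∨ (m : ℤ) = -(m₀ : ℤ)) := by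
          push_neg; constructor <;> omega
        have h2 : ¬(-(m : ℤ) = (m₀ : ℤ) ∨ -(m : ℤ) = -(m₀ : ℤ)) := by
          push_neg; constructor <;> omega
        have e1 : U (m : ℤ) = (1, 0, 1) := by simp only [hUdef]; exact if_neg h1
        have e2 : U (-(m : ℤ)) = (1, 0, 1) := by simp only [hUdef]; exact if_neg h2
        rw [e1, e2]
        simp only [Prod.smul_fst, Prod.fst_add, smul_eq_mul]
        norm_num; ring
      · have h1 : ((m₀ : ℤ) = (m₀ : ℤ) ∨ (m₀ : ℤ) = -(m₀ : ℤ)) := Or.inl rfl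
        have h2 : (-(m₀ : ℤ) = (m₀ : ℤ) ∨ -(m₀ : ℤ) = -(m₀ : ℤ)) := Or.inr rfl
        have e1 : U ((m₀ : ℕ) : ℤ) = (T, 0, 1) := if_pos h1
        have e2 : U (-(m₀ : ℤ)) = (T, 0, 1) := if_pos h2
        rw [e1, e2]
        simp only [Prod.smul_fst, Prod.fst_add, smul_eq_mul]
        ring
    have hU0 : (U 0).1 = 1 := by
      have h : ¬((0 : ℤ) = (m₀ : ℤ) ∨ (0 : ℤ) = -(m₀ : ℤ)) := by
        push_neg; constructor <;> omega
      have e : U 0 = (1, 0, 1) := by simp only [hUdef]; exact if_neg h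
      rw [e]
    have hT2 : 2 * |β m₀| * T = 2 + |B| := by
      rw [hTdef]; field_simp
    rcases lt_or_gt_of_ne hb with hneg | hpos
    · left
      have habs : |β m₀| = -β m₀ := abs_of_neg hneg
      rw [habs] at hT2
      have hBabs : B ≤ |B| := le_abs_self B
      simp only [Prod.fst_add, hsum, hU0]
      nlinarith
    · right
      have habs : |β m₀| = β m₀ := abs_of_pos hpos
      rw [habs] at hT2
      have hBabs : -|B| ≤ B := neg_abs_le B
      simp only [Prod.fst_sub, hsum, hU0]
      nlinarith
end

section
/- (Pressure positivity of the flux limiter) Let γ > 1, ε_p > 0, λ > 0, and let U, F*, F^LF ∈ ℝ³ be such that the half-updates have positive density, ρ(U − 2λF^LF) > 0 and ρ(U − 2λF*) > 0, and the Lax–Friedrichs half-update satisfies p(U − 2λF^LF) ≥ ε_p. Define θ_p = 1 if p(U − 2λF*) ≥ ε_p, and θ_p = (p(U − 2λF^LF) − ε_p)/(p(U − 2λF^LF) − p(U − 2λF*)) otherwise, and the limited flux F** = (1−θ_p)F^LF + θ_p F*. Then θ_p ∈ [0,1] and p(U − 2λF**) ≥ ε_p. -/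
/-!
The pressure is concave on states of positive density: the total energy is linear and the kinetic
energy `m²/(2ρ)` is convex, being the perspective of `m ↦ m²/2`. Since the half-update is affine
in the flux, the half-update with `F**` is the `θ_p`-combination of the two half-updates, so its
pressure dominates the same combination of their pressures, and `θ_p` is exactly the parameter at
which that linear interpolation still reaches `ε_p`.
-/

/-- Density of a conservative state `U = (ρ, m, E)`. -/
def rho (U : ℝ × ℝ × ℝ) : ℝ := U.1

lemma add_sq_div_add_le {a b x y : ℝ} (m n : ℝ) (ha : 0 ≤ a) (hb : 0 ≤ b) (hx : 0 < x)
    (hy : 0 < y) : (a * m + b * n) ^ 2 / (a * x + b * y) ≤ a * (m ^ 2 / x) + b * (n ^ 2 / y) := by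
  rcases (add_nonneg (mul_nonneg ha hx.le) (mul_nonneg hb hy.le)).eq_or_lt with h0 | hpos
  · rw [← h0, div_zero]; positivity
  rw [div_le_iff₀ hpos]
  have hgap : (a * (m ^ 2 / x) + b * (n ^ 2 / y)) * (a * x + b * y) - (a * m + b * n) ^ 2
      = a * b * (m * y - n * x) ^ 2 / (x * y) := by
    field_simp; ring
  have : 0 ≤ a * b * (m * y - n * x) ^ 2 / (x * y) := by positivity
  linarith

lemma convex_setOf_pos_rho : Convex ℝ {U | 0 < rho U} :=
  convex_halfSpace_gt (f := rho) ⟨fun _ _ => rfl, fun _ _ => rfl⟩ 0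

lemma convexOn_kineticEnergy : ConvexOn ℝ {U | 0 < rho U} fun U => U.2.1 ^ 2 / (2 * U.1) := by
  refine ⟨convex_setOf_pos_rho, ?_⟩
  rintro ⟨ρ₁, m₁, E₁⟩ (h₁ : 0 < ρ₁) ⟨ρ₂, m₂, E₂⟩ (h₂ : 0 < ρ₂) a b ha hb -
  simp only [Prod.smul_mk, Prod.mk_add_mk, smul_eq_mul]
  calc _ = (a * m₁ + b * m₂) ^ 2 / (a * (2 * ρ₁) + b * (2 * ρ₂)) := by ring
    _ ≤ _ := add_sq_div_add_le m₁ m₂ ha hb (by positivity) (by positivity)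

lemma concaveOn_pres {γ : ℝ} (hγ : 1 ≤ γ) : ConcaveOn ℝ {U | 0 < rho U} (pres γ) := by
  have hE : ConcaveOn ℝ {U | 0 < rho U} fun U : ℝ × ℝ × ℝ => U.2.2 :=
    (LinearMap.snd ℝ ℝ ℝ ∘ₗ LinearMap.snd ℝ ℝ (ℝ × ℝ)).concaveOn convex_setOf_pos_rho
  exact (hE.sub convexOn_kineticEnergy).smul (sub_nonneg.2 hγ)

/-- The limiter parameter `θ_p`, with `a = p(U − 2λF^LF)` and `b = p(U − 2λF*)`: the parameter at
which the linear interpolation from `a` to `b` drops to `ε`, or `1` if it never does. -/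
noncomputable def limiterTheta (ε a b : ℝ) : ℝ :=
  if ε ≤ b then 1 else (a - ε) / (a - b)

section limiterTheta

variable {ε a : ℝ} (b : ℝ)

lemma limiterTheta_mem_Icc (h : ε ≤ a) : limiterTheta ε a b ∈ Set.Icc 0 1 := by
  unfold limiterTheta
  split_ifs with hb
  · exact Set.right_mem_Icc.2 zero_le_one
  · have hab : 0 < a - b := by linarith
    exact ⟨div_nonneg (by linarith) hab.le, (div_le_one hab).2 (by linarith)⟩

lemma le_limiterTheta_interpolation (h : ε ≤ a) :
    ε ≤ (1 - limiterTheta ε a b) * a + limiterTheta ε a b * b := by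
  unfold limiterTheta
  split_ifs with hb
  · linarith
  · have hab : a - b ≠ 0 := by linarith
    exact le_of_eq (by field_simp; ring)

end limiterTheta

theorem flux_limiter_pressure_general (γ : ℝ) (hγ : 1 < γ) (εp lam : ℝ)
    (U Fstar FLF : ℝ × ℝ × ℝ)
    (hρLF : 0 < rho (U - (2 * lam) • FLF))
    (hρstar : 0 < rho (U - (2 * lam) • Fstar))
    (hpLF : εp ≤ pres γ (U - (2 * lam) • FLF))
    (θp : ℝ)
    (hθp : θp = if εp ≤ pres γ (U - (2 * lam) • Fstar) then 1
      else (pres γ (U - (2 * lam) • FLF) - εp) /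
        (pres γ (U - (2 * lam) • FLF) - pres γ (U - (2 * lam) • Fstar)))
    (Fss : ℝ × ℝ × ℝ) (hFss : Fss = (1 - θp) • FLF + θp • Fstar) :
    (0 ≤ θp ∧ θp ≤ 1) ∧ εp ≤ pres γ (U - (2 * lam) • Fss) := by
  set A := U - (2 * lam) • FLF
  set B := U - (2 * lam) • Fstar
  change θp = limiterTheta εp (pres γ A) (pres γ B) at hθp
  have hθ : θp ∈ Set.Icc 0 1 := hθp ▸ limiterTheta_mem_Icc _ hpLF
  have hsplit : U - (2 * lam) • Fss = (1 - θp) • A + θp • B := by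
    rw [hFss]; module
  refine ⟨hθ, ?_⟩
  calc εp ≤ (1 - θp) * pres γ A + θp * pres γ B := hθp ▸ le_limiterTheta_interpolation _ hpLF
    _ ≤ pres γ ((1 - θp) • A + θp • B) :=
      (concaveOn_pres hγ.le).2 hρLF hρstar (sub_nonneg.2 hθ.2) hθ.1 (sub_add_cancel 1 θp)
    _ = pres γ (U - (2 * lam) • Fss) := by rw [hsplit]

/-- Pressure positivity of the positivity-preserving flux limiter: the limited flux
`F** = (1−θ_p)F^LF + θ_p F*` yields a half-update with pressure at least `ε_p`. -/
theorem flux_limiter_pressure (γ : ℝ) (hγ : 1 < γ) (εp lam : ℝ) (hεp : 0 < εp)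
    (hlam : 0 < lam) (U Fstar FLF : ℝ × ℝ × ℝ)
    (hρLF : 0 < rho (U - (2 * lam) • FLF))
    (hρstar : 0 < rho (U - (2 * lam) • Fstar))
    (hpLF : εp ≤ pres γ (U - (2 * lam) • FLF))
    (θp : ℝ)
    (hθp : θp = if εp ≤ pres γ (U - (2 * lam) • Fstar) then 1
      else (pres γ (U - (2 * lam) • FLF) - εp) /
        (pres γ (U - (2 * lam) • FLF) - pres γ (U - (2 * lam) • Fstar)))
    (Fss : ℝ × ℝ × ℝ) (hFss : Fss = (1 - θp) • FLF + θp • Fstar) :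
    (0 ≤ θp ∧ θp ≤ 1) ∧ εp ≤ pres γ (U - (2 * lam) • Fss) :=
  flux_limiter_pressure_general γ hγ εp lam U Fstar FLF hρLF hρstar hpLF θp hθp Fss hFss
end

section
/- (Theorem 2: positivity of the conservative flux correction in local time stepping) Let γ > 1 and let 𝔾 = {U ∈ ℝ³ : ρ(U) > 0, p(U) > 0} be the set of admissible states. Let U ∈ ℝ³, let λ₀, λ₁ ≥ 0, and let F₀, F₁, F ∈ ℝ³. Suppose the three states U + 2λ₀F₀, U + 2λ₁F₁, and U − ½(λ₀ + λ₁)F all lie in 𝔾. Then the flux-corrected coarse-cell update Uⁿ⁺² = U + ½λ₀F₀ + ½λ₁F₁ − ¼(λ₀ + λ₁)F lies in 𝔾. -/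
private lemma cs_aux (a b x y : ℝ) (ha : 0 < a) (hb : 0 < b) :
    (x + y) ^ 2 / (a + b) ≤ x ^ 2 / a + y ^ 2 / b := by
  rw [div_add_div _ _ ha.ne' hb.ne', div_le_div_iff₀ (by linarith) (by positivity)]
  nlinarith [sq_nonneg (x * b - y * a), mul_pos ha hb]

private lemma key (a b c mA mB mC EA EB EC : ℝ) (ha : 0 < a) (hb : 0 < b) (hc : 0 < c)
    (hA : 0 < EA - mA ^ 2 / (2 * a)) (hB : 0 < EB - mB ^ 2 / (2 * b))
    (hC : 0 < EC - mC ^ 2 / (2 * c)) :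
    0 < (EA + EB + 2 * EC) / 4 -
      ((mA + mB + 2 * mC) / 4) ^ 2 / (2 * ((a + b + 2 * c) / 4)) := by
  have hT : 0 < a + b + 2 * c := by linarith
  have h1 := cs_aux a b mA mB ha hb
  have h2 := cs_aux (a + b) (2 * c) (mA + mB) (2 * mC) (by linarith) (by linarith)
  have e1 : (2 * mC) ^ 2 / (2 * c) = 2 * (mC ^ 2 / c) := by field_simp
  have e2 : ((mA + mB + 2 * mC) / 4) ^ 2 / (2 * ((a + b + 2 * c) / 4)) =
      (mA + mB + 2 * mC) ^ 2 / (a + b + 2 * c) / 8 := by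
    field_simp; ring
  have dA : mA ^ 2 / a = 2 * (mA ^ 2 / (2 * a)) := by field_simp
  have dB : mB ^ 2 / b = 2 * (mB ^ 2 / (2 * b)) := by field_simp
  have dC : mC ^ 2 / c = 2 * (mC ^ 2 / (2 * c)) := by field_simp
  rw [e2]
  linarith

/-- Theorem 2: positivity of the conservative flux correction in local time
stepping. If `U + 2λ₀F₀`, `U + 2λ₁F₁` and `U − ½(λ₀+λ₁)F` are admissible, then the
flux-corrected coarse-cell update `U + ½λ₀F₀ + ½λ₁F₁ − ¼(λ₀+λ₁)F` is admissible. -/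
theorem flux_correction_positivity (γ : ℝ) (hγ : 1 < γ)
    (U : ℝ × ℝ × ℝ) (lam0 lam1 : ℝ) (hlam0 : 0 ≤ lam0) (hlam1 : 0 ≤ lam1)
    (F0 F1 F : ℝ × ℝ × ℝ)
    (h0 : U + (2 * lam0) • F0 ∈ admissible γ)
    (h1 : U + (2 * lam1) • F1 ∈ admissible γ)
    (hF : U - ((lam0 + lam1) / 2) • F ∈ admissible γ) :
    U + (lam0 / 2) • F0 + (lam1 / 2) • F1 - ((lam0 + lam1) / 4) • F ∈ admissible γ := by
  have hgam : 0 < γ - 1 := by linarith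
  simp only [admissible, pres, Set.mem_setOf_eq, Prod.fst_add, Prod.fst_sub,
    Prod.snd_add, Prod.snd_sub, Prod.smul_fst, Prod.smul_snd, smul_eq_mul] at h0 h1 hF ⊢
  obtain ⟨ha, hA⟩ := h0
  obtain ⟨hb, hB⟩ := h1
  obtain ⟨hc, hC⟩ := hF
  have hA' : 0 < (U.2.2 + 2 * lam0 * F0.2.2) -
      (U.2.1 + 2 * lam0 * F0.2.1) ^ 2 / (2 * (U.1 + 2 * lam0 * F0.1)) := by
    nlinarith [hA]
  have hB' : 0 < (U.2.2 + 2 * lam1 * F1.2.2) -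
      (U.2.1 + 2 * lam1 * F1.2.1) ^ 2 / (2 * (U.1 + 2 * lam1 * F1.1)) := by
    nlinarith [hB]
  have hC' : 0 < (U.2.2 - (lam0 + lam1) / 2 * F.2.2) -
      (U.2.1 - (lam0 + lam1) / 2 * F.2.1) ^ 2 / (2 * (U.1 - (lam0 + lam1) / 2 * F.1)) := by
    nlinarith [hC]
  constructor
  · linarith
  · have hk := key (U.1 + 2 * lam0 * F0.1) (U.1 + 2 * lam1 * F1.1)
      (U.1 - (lam0 + lam1) / 2 * F.1)
      (U.2.1 + 2 * lam0 * F0.2.1) (U.2.1 + 2 * lam1 * F1.2.1)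
      (U.2.1 - (lam0 + lam1) / 2 * F.2.1)
      (U.2.2 + 2 * lam0 * F0.2.2) (U.2.2 + 2 * lam1 * F1.2.2)
      (U.2.2 - (lam0 + lam1) / 2 * F.2.2) ha hb hc hA' hB' hC'
    have eE : U.2.2 + lam0 / 2 * F0.2.2 + lam1 / 2 * F1.2.2 - (lam0 + lam1) / 4 * F.2.2 =
        ((U.2.2 + 2 * lam0 * F0.2.2) + (U.2.2 + 2 * lam1 * F1.2.2) +
          2 * (U.2.2 - (lam0 + lam1) / 2 * F.2.2)) / 4 := by ring
    have em : U.2.1 + lam0 / 2 * F0.2.1 + lam1 / 2 * F1.2.1 - (lam0 + lam1) / 4 * F.2.1 =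
        ((U.2.1 + 2 * lam0 * F0.2.1) + (U.2.1 + 2 * lam1 * F1.2.1) +
          2 * (U.2.1 - (lam0 + lam1) / 2 * F.2.1)) / 4 := by ring
    have er : U.1 + lam0 / 2 * F0.1 + lam1 / 2 * F1.1 - (lam0 + lam1) / 4 * F.1 =
        ((U.1 + 2 * lam0 * F0.1) + (U.1 + 2 * lam1 * F1.1) +
          2 * (U.1 - (lam0 + lam1) / 2 * F.1)) / 4 := by ring
    rw [eE, em, er]
    exact mul_pos hgam hk
end
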